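/- Let V be a ℂ-vector space, let W and F be ℂ-subspaces of V with F + W = V, and let Λ be a subgroup of the additive group of V. Let D ⊆ W be the subgroup of W generated by Λ ∩ W and F ∩ W. Then: (1) for every y ∈ Λ there exists z ∈ F with y − z ∈ W; (2) there is a unique group homomorphism h : Λ/(Λ ∩ W) → W/D such that for every y ∈ Λ and every z ∈ F with y − z ∈ W, h sends the class of y to the class of y − z. (This is the well-definedness of the homomorphism 𝓕_ét = gr^W_0 H_ℤ → G = W_{−1}H_ℤ\W_{−1}H_V/F^0W_{−1}H_V, x ↦ y − z, appearing in the construction of the functor 𝓗₁ → 𝓜₁, applied with V = H_V, W = W_{−1}H_V, F = F^0H_V, and Λ the image of H_ℤ in H_V.) -/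

import Mathlib

/-!
Since `F + W = V`, the inclusion `W → V` induces an isomorphism `W/(F ∩ W) ≃ V/F` (second
isomorphism theorem), whose inverse sends the class of `y` in `V/F` to the class of `y - z` for any
`z ∈ F` with `y - z ∈ W`. Composing `Λ → V/F` with this inverse and with `W/(F ∩ W) → W/D`
gives a homomorphism `Λ → W/D` that kills `Λ ∩ W ⊆ D` (take `z = 0`), hence factors through
`Λ/(Λ ∩ W)`. Uniqueness holds because every element of `Λ/(Λ ∩ W)` is the class of some `y ∈ Λ`.
-/

namespace AddSubgroup

variable {G : Type*} [AddCommGroup G] {F W : AddSubgroup G}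

theorem exists_mem_sub_mem_of_sup_eq_top (hFW : F ⊔ W = ⊤) (y : G) : ∃ z ∈ F, y - z ∈ W := by
  obtain ⟨z, hz, w, hw, rfl⟩ := mem_sup.mp (hFW ▸ mem_top y)
  exact ⟨z, hz, by simpa⟩

noncomputable def quotientEquivOfSupEqTop (hFW : F ⊔ W = ⊤) :
    W ⧸ ((QuotientAddGroup.mk' F).comp W.subtype).ker ≃+ G ⧸ F :=
  QuotientAddGroup.quotientKerEquivOfSurjective _ fun q => by
    obtain ⟨y, rfl⟩ := QuotientAddGroup.mk_surjective q
    obtain ⟨z, hz, hyz⟩ := exists_mem_sub_mem_of_sup_eq_top hFW y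
    exact ⟨⟨y - z, hyz⟩, QuotientAddGroup.eq_iff_sub_mem.mpr (by simpa using hz)⟩

noncomputable def projAlongMod (hFW : F ⊔ W = ⊤) (D : AddSubgroup W)
    (hFD : F.addSubgroupOf W ≤ D) : G →+ W ⧸ D :=
  (QuotientAddGroup.lift _ (QuotientAddGroup.mk' D) fun w hw =>
      (QuotientAddGroup.eq_zero_iff w).mpr <|
        hFD <| (QuotientAddGroup.eq_zero_iff (w : G)).mp (AddMonoidHom.mem_ker.mp hw)).comp
    ((quotientEquivOfSupEqTop hFW).symm.toAddMonoidHom.comp (QuotientAddGroup.mk' F))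

theorem projAlongMod_apply (hFW : F ⊔ W = ⊤) {D : AddSubgroup W} (hFD : F.addSubgroupOf W ≤ D)
    {y z : G} (hz : z ∈ F) (hyz : y - z ∈ W) :
    projAlongMod hFW D hFD y = QuotientAddGroup.mk ⟨y - z, hyz⟩ := by
  have : (quotientEquivOfSupEqTop hFW).symm y = QuotientAddGroup.mk ⟨y - z, hyz⟩ := by
    rw [AddEquiv.symm_apply_eq]
    exact QuotientAddGroup.eq_iff_sub_mem.mpr (by simpa using hz)
  simp only [projAlongMod, AddMonoidHom.comp_apply, QuotientAddGroup.mk'_apply,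
    AddEquiv.coe_toAddMonoidHom, this]
  rfl

end AddSubgroup

open AddSubgroup in
theorem albanese_etale_part_well_defined
    (V : Type*) [AddCommGroup V] [Module ℂ V]
    (W F : Submodule ℂ V) (hFW : F ⊔ W = ⊤)
    (Λ : AddSubgroup V)
    -- `D` : the subgroup of `W` generated by `Λ ∩ W` and `F ∩ W`
    (D : AddSubgroup W)
    (hD : D = AddSubgroup.closure
      ({x : W | (x : V) ∈ Λ} ∪ {x : W | (x : V) ∈ F})) :
    (∀ y ∈ Λ, ∃ z ∈ F, y - z ∈ W) ∧
    (∃! h : (Λ ⧸ W.toAddSubgroup.addSubgroupOf Λ) →+ (W ⧸ D),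
      ∀ (y : Λ) (z : V) (hz : z ∈ F) (hyz : (y : V) - z ∈ W),
        h (QuotientAddGroup.mk y) = QuotientAddGroup.mk ⟨(y : V) - z, hyz⟩) := by
  have hFW' : F.toAddSubgroup ⊔ W.toAddSubgroup = ⊤ := by
    rw [← Submodule.sup_toAddSubgroup, hFW, Submodule.top_toAddSubgroup]
  have hFD : F.toAddSubgroup.addSubgroupOf W.toAddSubgroup ≤ D :=
    fun _ hx => hD ▸ subset_closure (Or.inr hx)
  let p := (projAlongMod hFW' D hFD).comp Λ.subtype
  have hΛW : W.toAddSubgroup.addSubgroupOf Λ ≤ p.ker := fun y hy => by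
    rw [AddMonoidHom.mem_ker, AddMonoidHom.comp_apply, projAlongMod_apply hFW' hFD (zero_mem _)
      (by simpa using mem_addSubgroupOf.mp hy), QuotientAddGroup.eq_zero_iff]
    exact hD ▸ subset_closure (Or.inl (by simp))
  refine ⟨fun y _ => exists_mem_sub_mem_of_sup_eq_top hFW' y,
    QuotientAddGroup.lift _ p hΛW, fun y z hz hyz => projAlongMod_apply hFW' hFD hz hyz,
    fun h hh => QuotientAddGroup.addMonoidHom_ext _ (AddMonoidHom.ext fun y => ?_)⟩
  obtain ⟨z, hz, hyz⟩ := exists_mem_sub_mem_of_sup_eq_top hFW' (y : V)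
  exact (hh y z hz hyz).trans (projAlongMod_apply hFW' hFD hz hyz).symm
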